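/- Let d and n be integers with 1 ≤ d ≤ n and let α, λ ∈ (0,1). Then the proportion of d-element subsets X of [n] = {1,…,n} satisfying |X ∩ {1,…,⌊α·λ·n⌋}| ≥ λ·d is at most (2·α^λ)^d. -/

import Mathlib

open Finset
open scoped Classical

/-! A `d`-set `X` with `|X ∩ A| ≥ j`, where `A = {x < ⌊αλn⌋}` and `j = ⌈λd⌉`, contains a `j`-subset
of `A`, so a union bound leaves at most `C(|A|, j) C(n - j, d - j)` such sets. Since `|A| ≤ αn` we
have `C(|A|, j) ≤ α^j C(n, j)`, and `C(n, j) C(n - j, d - j) = C(n, d) C(d, j) ≤ 2^d C(n, d)`;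
finally `α^j ≤ α^{λd}` because `α < 1`. -/

theorem Nat.choose_le_pow_mul_choose {α : ℝ} (hα₀ : 0 ≤ α) (hα₁ : α ≤ 1) {m n : ℕ}
    (hmn : (m : ℝ) ≤ α * n) (j : ℕ) : (m.choose j : ℝ) ≤ α ^ j * n.choose j := by
  induction j with
  | zero => simp
  | succ j ih =>
    have hsub : ((m - j : ℕ) : ℝ) ≤ α * (n - j : ℕ) := by
      rcases le_or_gt j m with hjm | hmj
      · have hmn' : (m : ℝ) ≤ n := hmn.trans (mul_le_of_le_one_left n.cast_nonneg hα₁)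
        have hjn : j ≤ n := hjm.trans (by exact_mod_cast hmn')
        push_cast [hjm, hjn]
        nlinarith
      · rw [Nat.sub_eq_zero_of_le hmj.le, Nat.cast_zero]
        positivity
    have hm := congrArg (Nat.cast (R := ℝ)) (m.choose_succ_right_eq j)
    have hn := congrArg (Nat.cast (R := ℝ)) (n.choose_succ_right_eq j)
    push_cast at hm hn
    refine le_of_mul_le_mul_right ?_ (by positivity : (0 : ℝ) < j + 1)
    calc (m.choose (j + 1) : ℝ) * (j + 1) = m.choose j * (m - j : ℕ) := hm
      _ ≤ α ^ j * n.choose j * (α * (n - j : ℕ)) :=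
        mul_le_mul ih hsub (Nat.cast_nonneg _) (by positivity)
      _ = α ^ (j + 1) * n.choose (j + 1) * (j + 1) := by
        rw [mul_assoc (α ^ (j + 1)), hn]; ring

namespace Finset

variable {ι : Type*} (s : Finset ι) (p : ι → Prop) [DecidablePred p] {d j : ℕ}

theorem card_powersetCard_filter_le_choose_mul_choose (hjd : j ≤ d) :
    #{X ∈ s.powersetCard d | j ≤ #(X.filter p)} ≤
      (#(s.filter p)).choose j * (#s - j).choose (d - j) := by
  have hcover : {X ∈ s.powersetCard d | j ≤ #(X.filter p)} ⊆
      ((s.filter p).powersetCard j).biUnion fun T => {X ∈ s.powersetCard d | T ⊆ X} := by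
    intro X hX
    obtain ⟨hXs, hj⟩ := mem_filter.1 hX
    obtain ⟨T, hTX, hTj⟩ := exists_subset_card_eq hj
    exact mem_biUnion.2 ⟨T,
      mem_powersetCard.2 ⟨hTX.trans (filter_subset_filter p (mem_powersetCard.1 hXs).1), hTj⟩,
      mem_filter.2 ⟨hXs, hTX.trans (filter_subset p X)⟩⟩
  calc _ ≤ _ := card_le_card hcover
    _ ≤ ∑ T ∈ (s.filter p).powersetCard j, #{X ∈ s.powersetCard d | T ⊆ X} := card_biUnion_le
    _ = ∑ T ∈ (s.filter p).powersetCard j, (#s - j).choose (d - j) := by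
      refine sum_congr rfl fun T hT => ?_
      obtain ⟨hTs, hTj⟩ := mem_powersetCard.1 hT
      rw [← hTj]
      exact card_filter_powersetCard_subset T s d (hTs.trans (filter_subset p s)) (hTj ▸ hjd)
    _ = _ := by rw [sum_const, card_powersetCard, smul_eq_mul]

theorem card_powersetCard_filter_le_two_pow_mul {α : ℝ} (hα₀ : 0 ≤ α) (hα₁ : α ≤ 1)
    (hp : (#(s.filter p) : ℝ) ≤ α * #s) (hjd : j ≤ d) :
    (#{X ∈ s.powersetCard d | j ≤ #(X.filter p)} : ℝ) ≤ 2 ^ d * α ^ j * (#s).choose d := by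
  calc (#{X ∈ s.powersetCard d | j ≤ #(X.filter p)} : ℝ)
      ≤ (#(s.filter p)).choose j * (#s - j).choose (d - j) := by
        exact_mod_cast card_powersetCard_filter_le_choose_mul_choose s p hjd
    _ ≤ α ^ j * (#s).choose j * (#s - j).choose (d - j) := by
        gcongr
        exact Nat.choose_le_pow_mul_choose hα₀ hα₁ hp j
    _ = α ^ j * (#s).choose d * d.choose j := by
        rw [mul_assoc, mul_assoc, ← Nat.cast_mul, ← Nat.cast_mul, ← Nat.choose_mul hjd]
    _ ≤ α ^ j * (#s).choose d * 2 ^ d := by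
        gcongr
        exact_mod_cast Nat.choose_le_two_pow d j
    _ = 2 ^ d * α ^ j * (#s).choose d := by ring

end Finset

theorem stmt19_general (d n : ℕ) (α lam : ℝ)
    (hα : α ∈ Set.Ioo (0 : ℝ) 1) (hlam : lam ∈ Set.Ioo (0 : ℝ) 1) :
    (((Finset.powersetCard d (Finset.univ : Finset (Fin n))).filter
          (fun X => lam * (d : ℝ) ≤
            ((X.filter fun x : Fin n => (x : ℕ) < Nat.floor (α * lam * (n : ℝ))).card : ℝ))).card
        : ℝ) / (n.choose d : ℝ) ≤ (2 * α ^ lam) ^ d := by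
  obtain ⟨hα₀, hα₁⟩ := hα
  obtain ⟨hlam₀, hlam₁⟩ := hlam
  set M := ⌊α * lam * n⌋₊
  set j := ⌈lam * d⌉₊
  have hM :
      (#(univ.filter fun x : Fin n => (x : ℕ) < M) : ℝ) ≤ α * #(univ : Finset (Fin n)) := by
    rw [Fin.card_filter_val_lt, card_univ, Fintype.card_fin]
    calc ((min n M : ℕ) : ℝ) ≤ M := by exact_mod_cast min_le_right n M
      _ ≤ α * lam * n := Nat.floor_le (by positivity)
      _ ≤ α * n :=
        mul_le_mul_of_nonneg_right (mul_le_of_le_one_right hα₀.le hlam₁.le) n.cast_nonneg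
  have hjd : j ≤ d := Nat.ceil_le.2 (mul_le_of_le_one_left d.cast_nonneg hlam₁.le)
  refine div_le_of_le_mul₀ (by positivity) (by positivity) ?_
  have hceil : ∀ X : Finset (Fin n), lam * d ≤ #(X.filter fun x : Fin n => (x : ℕ) < M) ↔
      j ≤ #(X.filter fun x : Fin n => (x : ℕ) < M) := fun X => Nat.ceil_le.symm
  rw [filter_congr fun X _ => hceil X]
  calc _ ≤ 2 ^ d * α ^ j * (n.choose d : ℝ) := by
        simpa using card_powersetCard_filter_le_two_pow_mul univ _ hα₀.le hα₁.le hM hjd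
    _ ≤ 2 ^ d * α ^ (lam * d) * (n.choose d : ℝ) := by
        gcongr
        calc α ^ j = α ^ (j : ℝ) := (Real.rpow_natCast α j).symm
          _ ≤ α ^ (lam * d) := Real.rpow_le_rpow_of_exponent_ge hα₀ hα₁.le (Nat.le_ceil _)
    _ = (2 * α ^ lam) ^ d * (n.choose d : ℝ) := by
        rw [mul_pow, Real.rpow_mul hα₀.le, Real.rpow_natCast]

theorem stmt19 (d n : ℕ) (hd : 1 ≤ d) (hdn : d ≤ n) (α lam : ℝ)
    (hα : α ∈ Set.Ioo (0 : ℝ) 1) (hlam : lam ∈ Set.Ioo (0 : ℝ) 1) :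
    (((Finset.powersetCard d (Finset.univ : Finset (Fin n))).filter
          (fun X => lam * (d : ℝ) ≤
            ((X.filter fun x : Fin n => (x : ℕ) < Nat.floor (α * lam * (n : ℝ))).card : ℝ))).card
        : ℝ) / (n.choose d : ℝ) ≤ (2 * α ^ lam) ^ d :=
  stmt19_general d n α lam hα hlam
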